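/- arXiv:1711.03028 — 4 statements merged into one kernel-verified Lean document; each statement's English description precedes it below -/
import Mathlib

section
/- For any Simplicity types A and B and any function f : A → B, there exists a core Simplicity expression t with input type A and output type B whose denotation equals f (finitary completeness of core Simplicity). -/
inductive Ty : Type
  | unit : Ty
  | sum : Ty → Ty → Ty
  | prod : Ty → Ty → Ty

def Ty.interp : Ty → Type
  | .unit => Unit
  | .sum a b => Sum a.interp b.interp
  | .prod a b => a.interp × b.interp

inductive Term : Ty → Ty → Type
  | iden {A : Ty} : Term A A
  | comp {A B C : Ty} : Term A B → Term B C → Term A C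
  | unit {A : Ty} : Term A .unit
  | injl {A B C : Ty} : Term A B → Term A (.sum B C)
  | injr {A B C : Ty} : Term A C → Term A (.sum B C)
  | case {A B C D : Ty} : Term (.prod A C) D → Term (.prod B C) D →
      Term (.prod (.sum A B) C) D
  | pair {A B C : Ty} : Term A B → Term A C → Term A (.prod B C)
  | take {A B C : Ty} : Term A C → Term (.prod A B) C
  | drop {A B C : Ty} : Term B C → Term (.prod A B) C

def Term.eval : {A B : Ty} → Term A B → A.interp → B.interp
  | _, _, .iden, a => a
  | _, _, .comp s t, a => t.eval (s.eval a)
  | _, _, .unit, _ => ()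
  | _, _, .injl t, a => Sum.inl (t.eval a)
  | _, _, .injr t, a => Sum.inr (t.eval a)
  | _, _, .case s t, x =>
      match x with
      | (Sum.inl a, c) => s.eval (a, c)
      | (Sum.inr b, c) => t.eval (b, c)
  | _, _, .pair s t, a => (s.eval a, t.eval a)
  | _, _, .take t, x => t.eval x.1
  | _, _, .drop t, x => t.eval x.2


lemma const_rep : ∀ (B A : Ty) (b : B.interp), ∃ t : Term A B, t.eval = fun _ => b := by
  intro B
  induction B with
  | unit =>
    intro A b
    exact ⟨Term.unit, funext fun a => rfl⟩
  | sum B₁ B₂ ih₁ ih₂ =>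
    intro A b
    cases b with
    | inl b₁ =>
      obtain ⟨t, ht⟩ := ih₁ A b₁
      exact ⟨Term.injl t, by funext a; simp [Term.eval, ht]; rfl⟩
    | inr b₂ =>
      obtain ⟨t, ht⟩ := ih₂ A b₂
      exact ⟨Term.injr t, by funext a; simp [Term.eval, ht]; rfl⟩
  | prod B₁ B₂ ih₁ ih₂ =>
    intro A b
    obtain ⟨t₁, ht₁⟩ := ih₁ A b.1
    obtain ⟨t₂, ht₂⟩ := ih₂ A b.2
    exact ⟨Term.pair t₁ t₂, by funext a; simp [Term.eval, ht₁, ht₂]; rfl⟩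

lemma rep_aux : ∀ (A C B : Ty) (f : (Ty.prod A C).interp → B.interp),
    (∀ g : C.interp → B.interp, ∃ t : Term C B, t.eval = g) →
    ∃ t : Term (Ty.prod A C) B, t.eval = f := by
  intro A
  induction A with
  | unit =>
    intro C B f h
    obtain ⟨t, ht⟩ := h (fun c => f ((), c))
    exact ⟨Term.drop t, by funext x; obtain ⟨⟨⟩, c⟩ := x; simp [Term.eval, ht]⟩
  | sum A₁ A₂ ih₁ ih₂ =>
    intro C B f h
    obtain ⟨t₁, ht₁⟩ := ih₁ C B (fun x => f (Sum.inl x.1, x.2)) h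
    obtain ⟨t₂, ht₂⟩ := ih₂ C B (fun x => f (Sum.inr x.1, x.2)) h
    refine ⟨Term.case t₁ t₂, funext fun x => ?_⟩
    obtain ⟨a, c⟩ := x
    cases a <;> simp [Term.eval, ht₁, ht₂]
  | prod A₁ A₂ ih₁ ih₂ =>
    intro C B f h
    obtain ⟨t, ht⟩ := ih₁ (Ty.prod A₂ C) B (fun x => f ((x.1, x.2.1), x.2.2))
      (fun g => ih₂ C B g h)
    refine ⟨Term.comp (Term.pair (Term.take (Term.take Term.iden))
      (Term.pair (Term.take (Term.drop Term.iden)) (Term.drop Term.iden))) t,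
      funext fun x => ?_⟩
    simp [Term.eval, ht]; rfl

theorem finitary_completeness (A B : Ty) (f : A.interp → B.interp) :
    ∃ t : Term A B, t.eval = f := by
  obtain ⟨t, ht⟩ := rep_aux A Ty.unit B (fun x => f x.1)
    (fun g => by
      obtain ⟨t, ht⟩ := const_rep B Ty.unit (g ())
      exact ⟨t, by funext a; cases a; simp [ht]⟩)
  refine ⟨Term.comp (Term.pair Term.iden Term.unit) t, funext fun a => ?_⟩
  simp [Term.eval, ht]
end

section
/- The full adder for 2ⁿ-bit words is correct: for a, b : 2ⁿ (n a power of 2) and a carry bit c, if ⟦fulladderₙ⟧((a,b),c) = (x,y), then (value of x)·2ⁿ + (value of y) = (value of a) + (value of b) + (value of c). -/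
def Bit : Ty := .sum .unit .unit

def bitVal : Bit.interp → ℕ
  | Sum.inl _ => 0
  | Sum.inr _ => 1

def Word : ℕ → Ty
  | 0 => Bit
  | n + 1 => .prod (Word n) (Word n)

def wordVal : (k : ℕ) → (Word k).interp → ℕ
  | 0, b => bitVal b
  | k + 1, x => wordVal k x.1 * 2 ^ 2 ^ k + wordVal k x.2

def bitflip : Term Bit Bit :=
  .comp (.pair .iden .unit) (.case (.injr .unit) (.injl .unit))

def adder : Term (.prod Bit Bit) (Word 1) :=
  .case (.drop (.pair (.injl .unit) .iden)) (.drop (.pair .iden bitflip))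

def fulladder : (k : ℕ) → Term (.prod (.prod (Word k) (Word k)) Bit) (.prod Bit (Word k))
  | 0 =>
      .comp (.pair (.take adder) (.drop .iden))
        (.comp
          (.pair (.take (.take .iden))
            (.comp (.pair (.take (.drop .iden)) (.drop .iden)) adder))
          (.pair (.case (.drop (.take .iden)) (.injr .unit)) (.drop (.drop .iden))))
  | k + 1 =>
      .comp
        (.pair (.take (.pair (.take (.take .iden)) (.drop (.take .iden))))
          (.comp
            (.pair (.take (.pair (.take (.drop .iden)) (.drop (.drop .iden))))
              (.drop .iden))
            (fulladder k)))
        (.comp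
          (.pair (.drop (.drop .iden))
            (.comp (.pair (.take .iden) (.drop (.take .iden))) (fulladder k)))
          (.pair (.drop (.take .iden)) (.pair (.drop (.drop .iden)) (.take .iden))))

theorem fulladder_correct (k : ℕ) (a b : (Word k).interp) (c : Bit.interp)
    (x : Bit.interp) (y : (Word k).interp)
    (h : (fulladder k).eval ((a, b), c) = (x, y)) :
    bitVal x * 2 ^ 2 ^ k + wordVal k y = wordVal k a + wordVal k b + bitVal c := by
  induction k generalizing c x with
  | zero =>
      rcases a with a | a <;> rcases b with b | b <;> rcases c with c | c <;>
        simp only [fulladder, adder, bitflip, Term.eval] at h <;>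
        cases h <;> rfl
  | succ k ih =>
      obtain ⟨a1, a2⟩ := a
      obtain ⟨b1, b2⟩ := b
      rcases h1 : (fulladder k).eval ((a2, b2), c) with ⟨c1, y1⟩
      rcases h2 : (fulladder k).eval ((a1, b1), c1) with ⟨c2, y2⟩
      simp only [fulladder, Term.eval, h1, h2, Prod.mk.injEq] at h
      obtain ⟨rfl, rfl⟩ := h
      have e1 := ih a2 b2 c c1 y1 h1
      have e2 := ih a1 b1 c1 x y2 h2
      simp only [wordVal]
      have hB : 2 ^ 2 ^ (k + 1) = 2 ^ 2 ^ k * 2 ^ 2 ^ k := by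
        rw [← pow_add]; ring_nf
      rw [hB]
      calc bitVal x * (2 ^ 2 ^ k * 2 ^ 2 ^ k) + (wordVal k y2 * 2 ^ 2 ^ k + wordVal k y1)
          = (bitVal x * 2 ^ 2 ^ k + wordVal k y2) * 2 ^ 2 ^ k + wordVal k y1 := by ring
        _ = (wordVal k a1 + wordVal k b1 + bitVal c1) * 2 ^ 2 ^ k + wordVal k y1 := by rw [e2]
        _ = wordVal k a1 * 2 ^ 2 ^ k + wordVal k b1 * 2 ^ 2 ^ k
              + (bitVal c1 * 2 ^ 2 ^ k + wordVal k y1) := by ring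
        _ = wordVal k a1 * 2 ^ 2 ^ k + wordVal k b1 * 2 ^ 2 ^ k
              + (wordVal k a2 + wordVal k b2 + bitVal c) := by rw [e1]
        _ = wordVal k a1 * 2 ^ 2 ^ k + wordVal k a2
              + (wordVal k b1 * 2 ^ 2 ^ k + wordVal k b2) + bitVal c := by ring
end

section
/- Correctness of the Bit Machine operational semantics: for any core Simplicity expression t : A ⊢ B and value v : A, executing the instruction sequence ⟪t⟫ from the initial state (read-frame stack containing only ⟨v⟩_A with cursor at the beginning; write-frame stack containing only [?]^bitSize(B) with cursor at the beginning) does not crash and terminates in the state where the read-frame stack contains only ⟨v⟩_A with cursor at the beginning and the write-frame stack contains only ⟨⟦t⟧(v)⟩_B with cursor at the end. -/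
def Ty.bitSize : Ty → ℕ
  | .unit => 0
  | .sum a b => 1 + max a.bitSize b.bitSize
  | .prod a b => a.bitSize + b.bitSize

def padl (a b : Ty) : ℕ := max a.bitSize b.bitSize - a.bitSize
def padr (a b : Ty) : ℕ := max a.bitSize b.bitSize - b.bitSize

abbrev Cell := Option Bool

def Ty.encode : (A : Ty) → A.interp → List Cell
  | .unit, _ => []
  | .sum a b, Sum.inl x => (some false :: List.replicate (padl a b) none) ++ a.encode x
  | .sum a b, Sum.inr y => (some true :: List.replicate (padr a b) none) ++ b.encode y
  | .prod a b, x => a.encode x.1 ++ b.encode x.2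
/-- A frame of the Bit Machine: an array of cells together with a cursor. -/
structure Frame where
  cells : List Cell
  cursor : ℕ

/-- A state of the Bit Machine: a stack of read frames and a stack of write
frames (the head of each list is the active frame). -/
structure MState where
  readStack : List Frame
  writeStack : List Frame

/-- Total number of cells in both stacks. -/
def MState.cellCount (s : MState) : ℕ :=
  (s.readStack.map fun f => f.cells.length).sum +
    (s.writeStack.map fun f => f.cells.length).sum

def nopI (s : MState) : Option MState := some s

def writeI (b : Bool) (s : MState) : Option MState :=
  match s.writeStack with
  | [] => none
  | w :: ws =>
    if w.cells[w.cursor]? = some none then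
      some { s with writeStack := ⟨w.cells.set w.cursor (some b), w.cursor + 1⟩ :: ws }
    else none

def copyI (n : ℕ) (s : MState) : Option MState :=
  match s.readStack, s.writeStack with
  | r :: _, w :: ws =>
    if r.cursor + n ≤ r.cells.length ∧ w.cursor + n ≤ w.cells.length ∧
        ((w.cells.drop w.cursor).take n).all Option.isNone then
      some { s with writeStack :=
        ⟨w.cells.take w.cursor ++ (r.cells.drop r.cursor).take n ++
            w.cells.drop (w.cursor + n),
          w.cursor + n⟩ :: ws }
    else none
  | _, _ => none

def skipI (n : ℕ) (s : MState) : Option MState :=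
  match s.writeStack with
  | [] => none
  | w :: ws =>
    if w.cursor + n ≤ w.cells.length then
      some { s with writeStack := ⟨w.cells, w.cursor + n⟩ :: ws }
    else none

def fwdI (n : ℕ) (s : MState) : Option MState :=
  match s.readStack with
  | [] => none
  | r :: rs =>
    if r.cursor + n ≤ r.cells.length then
      some { s with readStack := ⟨r.cells, r.cursor + n⟩ :: rs }
    else none

def bwdI (n : ℕ) (s : MState) : Option MState :=
  match s.readStack with
  | [] => none
  | r :: rs =>
    if n ≤ r.cursor then
      some { s with readStack := ⟨r.cells, r.cursor - n⟩ :: rs }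
    else none

def newFrameI (n : ℕ) (s : MState) : Option MState :=
  some { s with writeStack := ⟨List.replicate n none, 0⟩ :: s.writeStack }

def moveFrameI (s : MState) : Option MState :=
  match s.writeStack with
  | w :: w' :: ws =>
    some { readStack := ⟨w.cells, 0⟩ :: s.readStack, writeStack := w' :: ws }
  | _ => none

def dropFrameI (s : MState) : Option MState :=
  match s.readStack with
  | _ :: r :: rs => some { s with readStack := r :: rs }
  | _ => none

/-- The `read` instruction: returns the bit under the active read frame's
cursor, crashing on an undefined cell or an out-of-range cursor. -/
def readI (s : MState) : Option Bool :=
  match s.readStack with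
  | r :: _ =>
    match r.cells[r.cursor]? with
    | some (some b) => some b
    | _ => none
  | [] => none

/-- A run of the machine: from a state, either crash, or produce the final
state together with the maximum of `MState.cellCount` over all states
encountered during execution (including the initial and final ones). -/
abbrev Run := MState → Option (MState × ℕ)

def instr (f : MState → Option MState) : Run := fun s =>
  (f s).map fun s' => (s', max s.cellCount s'.cellCount)

def seqRun (p q : Run) : Run := fun s => do
  let (s₁, n₁) ← p s
  let (s₂, n₂) ← q s₁
  pure (s₂, max n₁ n₂)

/-- Translation of core Simplicity to the Bit Machine: `runCore t` is the
state transformation (with cell-usage tracking) of executing `⟪t⟫`. -/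
def runCore : {A B : Ty} → Term A B → Run
  | A, _, .iden => instr (copyI A.bitSize)
  | _, _, @Term.comp _ B _ s t =>
      seqRun (instr (newFrameI B.bitSize))
        (seqRun (runCore s)
          (seqRun (instr moveFrameI)
            (seqRun (runCore t) (instr dropFrameI))))
  | _, _, .unit => instr nopI
  | _, _, @Term.injl _ B C t =>
      seqRun (instr (writeI false)) (seqRun (instr (skipI (padl B C))) (runCore t))
  | _, _, @Term.injr _ B C t =>
      seqRun (instr (writeI true)) (seqRun (instr (skipI (padr B C))) (runCore t))
  | _, _, @Term.case A B _ _ s t => fun st =>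
      match readI st with
      | some false =>
          seqRun (instr (fwdI (1 + padl A B)))
            (seqRun (runCore s) (instr (bwdI (1 + padl A B)))) st
      | some true =>
          seqRun (instr (fwdI (1 + padr A B)))
            (seqRun (runCore t) (instr (bwdI (1 + padr A B)))) st
      | none => none
  | _, _, .pair s t => seqRun (runCore s) (runCore t)
  | _, _, .take t => runCore t
  | _, _, @Term.drop A _ _ t =>
      seqRun (instr (fwdI A.bitSize)) (seqRun (runCore t) (instr (bwdI A.bitSize)))

/-- The standard initial state for evaluating `t : A ⊢ B` on input `v`. -/
def initState (A B : Ty) (v : A.interp) : MState :=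
  { readStack := [⟨A.encode v, 0⟩],
    writeStack := [⟨List.replicate B.bitSize none, 0⟩] }

/-- The expected final state after evaluating `t : A ⊢ B` on input `v`
with output `w`. -/
def finalState (A B : Ty) (v : A.interp) (w : B.interp) : MState :=
  { readStack := [⟨A.encode v, 0⟩],
    writeStack := [⟨B.encode w, B.bitSize⟩] }

/-! ### Auxiliary lemmas -/

lemma encode_length : ∀ (A : Ty) (v : A.interp), (A.encode v).length = A.bitSize
  | .unit, _ => rfl
  | .sum a b, Sum.inl x => by
      simp [Ty.encode, encode_length a x, Ty.bitSize, padl]; omega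
  | .sum a b, Sum.inr y => by
      simp [Ty.encode, encode_length b y, Ty.bitSize, padr]; omega
  | .prod a b, (x, y) => by
      simp [Ty.encode, encode_length a x, encode_length b y, Ty.bitSize]

lemma instr_eval {f : MState → Option MState} {s s' : MState} (h : f s = some s') :
    instr f s = some (s', max s.cellCount s'.cellCount) := by simp [instr, h]

lemma seq_eval {p q : Run} {s s₁ s₂ : MState} {n₁ n₂ : ℕ}
    (hp : p s = some (s₁, n₁)) (hq : q s₁ = some (s₂, n₂)) :
    seqRun p q s = some (s₂, max n₁ n₂) := by simp [seqRun, hp, hq]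

lemma set_len (p rest : List Cell) (b : Cell) :
    (p ++ (none : Cell) :: rest).set p.length b = p ++ b :: rest := by
  induction p with
  | nil => rfl
  | cons h t ih => simp [List.set, ih]

lemma getElem?_len (p x : List Cell) : (p ++ x)[p.length]? = x[0]? := by
  rw [List.getElem?_append_right le_rfl, Nat.sub_self]

lemma take_len {n : ℕ} (a b : List Cell) (h : a.length = n) : (a ++ b).take n = a := by
  subst h; exact List.take_left

lemma drop_len {n : ℕ} (a b : List Cell) (h : a.length = n) : (a ++ b).drop n = b := by
  subst h; exact List.drop_left

lemma fwd_eval {n cur cur' : ℕ} {cs : List Cell} (h : cur + n = cur')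
    (hle : cur + n ≤ cs.length) (rs : List Frame) (W : List Frame) :
    fwdI n ⟨⟨cs, cur⟩ :: rs, W⟩ = some ⟨⟨cs, cur'⟩ :: rs, W⟩ := by
  subst h; unfold fwdI; simp [hle]

lemma bwd_eval {n cur cur' : ℕ} {cs : List Cell} (h : cur = cur' + n)
    (rs : List Frame) (W : List Frame) :
    bwdI n ⟨⟨cs, cur⟩ :: rs, W⟩ = some ⟨⟨cs, cur'⟩ :: rs, W⟩ := by
  unfold bwdI; simp [h]

lemma skip_eval {n cur cur' : ℕ} {cs : List Cell} (h : cur + n = cur')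
    (hle : cur + n ≤ cs.length) (R : List Frame) (ws : List Frame) :
    skipI n ⟨R, ⟨cs, cur⟩ :: ws⟩ = some ⟨R, ⟨cs, cur'⟩ :: ws⟩ := by
  subst h; unfold skipI; simp [hle]

lemma write_eval {b : Bool} (p rest : List Cell) (R ws : List Frame) :
    writeI b ⟨R, ⟨p ++ (none : Cell) :: rest, p.length⟩ :: ws⟩ =
    some ⟨R, ⟨p ++ some b :: rest, p.length + 1⟩ :: ws⟩ := by
  unfold writeI
  simp only
  rw [if_pos]
  · rw [set_len]
  · rw [getElem?_len]; simp

lemma copy_eval {n : ℕ} (l y r p q : List Cell) (hy : y.length = n) (rs ws : List Frame) :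
    copyI n ⟨⟨l ++ y ++ r, l.length⟩ :: rs,
        ⟨p ++ List.replicate n none ++ q, p.length⟩ :: ws⟩ =
    some ⟨⟨l ++ y ++ r, l.length⟩ :: rs, ⟨p ++ y ++ q, p.length + n⟩ :: ws⟩ := by
  unfold copyI
  simp only
  rw [if_pos]
  · congr 3
    rw [List.append_assoc p, List.append_assoc l, List.take_left, List.drop_left,
      take_len y r hy,
      show (p ++ (List.replicate n (none : Cell) ++ q)) =
        (p ++ List.replicate n (none : Cell)) ++ q by simp,
      drop_len _ q (by simp)]
  · refine ⟨by simp [hy], by simp, ?_⟩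
    rw [List.append_assoc p, List.drop_left, take_len _ q (by simp)]
    simp [List.all_eq_true, List.mem_replicate]

lemma runCore_main : ∀ {A B : Ty} (t : Term A B) (v : A.interp)
    (l r : List Cell) (rs : List Frame) (p q : List Cell) (ws : List Frame),
    ∃ n, runCore t
      ⟨⟨l ++ A.encode v ++ r, l.length⟩ :: rs,
       ⟨p ++ List.replicate B.bitSize none ++ q, p.length⟩ :: ws⟩ =
      some (⟨⟨l ++ A.encode v ++ r, l.length⟩ :: rs,
       ⟨p ++ B.encode (t.eval v) ++ q, p.length + B.bitSize⟩ :: ws⟩, n) := by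
  intro A B t
  induction t with
  | @iden A =>
    intro v l r rs p q ws
    exact ⟨_, instr_eval (copy_eval l (A.encode v) r p q (encode_length A v) rs ws)⟩
  | @comp A B C s t ihs iht =>
    intro v l r rs p q ws
    obtain ⟨n₁, h₁⟩ := ihs v l r rs [] []
      (⟨p ++ List.replicate C.bitSize none ++ q, p.length⟩ :: ws)
    simp only [List.nil_append, List.append_nil, List.length_nil, Nat.zero_add] at h₁
    obtain ⟨n₂, h₂⟩ := iht (s.eval v) [] [] (⟨l ++ A.encode v ++ r, l.length⟩ :: rs) p q ws
    simp only [List.nil_append, List.append_nil, List.length_nil, Nat.zero_add] at h₂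
    exact ⟨_, seq_eval (instr_eval rfl)
      (seq_eval h₁ (seq_eval (instr_eval rfl) (seq_eval h₂ (instr_eval rfl))))⟩
  | @unit A =>
    intro v l r rs p q ws
    exact ⟨_, instr_eval rfl⟩
  | @injl A B C t iht =>
    intro v l r rs p q ws
    have hrep : List.replicate (Ty.bitSize (.sum B C)) (none : Cell) =
        (none : Cell) :: (List.replicate (padl B C) none ++ List.replicate B.bitSize none) := by
      rw [← List.replicate_add,
        show padl B C + B.bitSize = max B.bitSize C.bitSize by unfold padl; omega,
        show Ty.bitSize (.sum B C) = (max B.bitSize C.bitSize) + 1 by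
          simp only [Ty.bitSize]; omega,
        List.replicate_succ]
    obtain ⟨n₁, h₁⟩ := iht v l r rs (p ++ some false :: List.replicate (padl B C) none) q ws
    rw [show (p ++ some false :: List.replicate (padl B C) none).length
        = p.length + 1 + padl B C by simp; omega] at h₁
    simp only [List.append_assoc, List.cons_append] at h₁
    have h₂ := write_eval (b := false) p
      (List.replicate (padl B C) none ++ (List.replicate B.bitSize none ++ q))
      (⟨l ++ (A.encode v ++ r), l.length⟩ :: rs) ws
    have h₃ := skip_eval (n := padl B C) (cur := p.length + 1)
      (cs := p ++ some false :: (List.replicate (padl B C) none ++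
        (List.replicate B.bitSize none ++ q))) rfl (by simp; omega)
      (⟨l ++ (A.encode v ++ r), l.length⟩ :: rs) ws
    rw [show (Ty.encode (.sum B C) (Term.eval (.injl t : Term A (.sum B C)) v) : List Cell)
        = some false :: (List.replicate (padl B C) none ++ B.encode (t.eval v)) from rfl,
      show p.length + Ty.bitSize (.sum B C) = p.length + 1 + padl B C + B.bitSize by
        simp only [Ty.bitSize]; unfold padl; omega,
      hrep]
    simp only [List.append_assoc, List.cons_append]
    exact ⟨_, seq_eval (instr_eval h₂) (seq_eval (instr_eval h₃) h₁)⟩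
  | @injr A B C t iht =>
    intro v l r rs p q ws
    have hrep : List.replicate (Ty.bitSize (.sum B C)) (none : Cell) =
        (none : Cell) :: (List.replicate (padr B C) none ++ List.replicate C.bitSize none) := by
      rw [← List.replicate_add,
        show padr B C + C.bitSize = max B.bitSize C.bitSize by unfold padr; omega,
        show Ty.bitSize (.sum B C) = (max B.bitSize C.bitSize) + 1 by
          simp only [Ty.bitSize]; omega,
        List.replicate_succ]
    obtain ⟨n₁, h₁⟩ := iht v l r rs (p ++ some true :: List.replicate (padr B C) none) q ws
    rw [show (p ++ some true :: List.replicate (padr B C) none).length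
        = p.length + 1 + padr B C by simp; omega] at h₁
    simp only [List.append_assoc, List.cons_append] at h₁
    have h₂ := write_eval (b := true) p
      (List.replicate (padr B C) none ++ (List.replicate C.bitSize none ++ q))
      (⟨l ++ (A.encode v ++ r), l.length⟩ :: rs) ws
    have h₃ := skip_eval (n := padr B C) (cur := p.length + 1)
      (cs := p ++ some true :: (List.replicate (padr B C) none ++
        (List.replicate C.bitSize none ++ q))) rfl (by simp; omega)
      (⟨l ++ (A.encode v ++ r), l.length⟩ :: rs) ws
    rw [show (Ty.encode (.sum B C) (Term.eval (.injr t : Term A (.sum B C)) v) : List Cell)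
        = some true :: (List.replicate (padr B C) none ++ C.encode (t.eval v)) from rfl,
      show p.length + Ty.bitSize (.sum B C) = p.length + 1 + padr B C + C.bitSize by
        simp only [Ty.bitSize]; unfold padr; omega,
      hrep]
    simp only [List.append_assoc, List.cons_append]
    exact ⟨_, seq_eval (instr_eval h₂) (seq_eval (instr_eval h₃) h₁)⟩
  | @case A B C D s t ihs iht =>
    intro v l r rs p q ws
    obtain ⟨ab, c⟩ := v
    cases ab with
    | inl a =>
      have hcells : l ++ Ty.encode (.prod (.sum A B) C) (Sum.inl a, c) ++ r =
          (l ++ some false :: List.replicate (padl A B) none) ++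
            Ty.encode (.prod A C) (a, c) ++ r := by
        simp [Ty.encode, List.append_assoc]
      have hread : readI ⟨⟨l ++ Ty.encode (.prod (.sum A B) C) (Sum.inl a, c) ++ r,
          l.length⟩ :: rs, ⟨p ++ List.replicate D.bitSize none ++ q, p.length⟩ :: ws⟩ =
          some false := by
        unfold readI
        simp only
        rw [show l ++ Ty.encode (.prod (.sum A B) C) (Sum.inl a, c) ++ r =
          l ++ (some false :: (List.replicate (padl A B) none ++
            (Ty.encode (.prod A C) (a, c) ++ r))) by simp [Ty.encode, List.append_assoc],
          getElem?_len]
        simp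
      obtain ⟨n₁, h₁⟩ := ihs (a, c) (l ++ some false :: List.replicate (padl A B) none)
        r rs p q ws
      rw [show ((l ++ some false :: List.replicate (padl A B) none).length)
          = l.length + (1 + padl A B) by simp; omega] at h₁
      simp only [runCore, hread]
      rw [hcells]
      exact ⟨_, seq_eval (instr_eval (fwd_eval rfl (by rw [← hcells]; simp [encode_length, Ty.bitSize]; have := encode_length (.prod (.sum A B) C) (Sum.inl a, c); simp only [Ty.bitSize] at this; simp [padl, padr]; omega) rs _))
        (seq_eval h₁ (instr_eval (bwd_eval rfl rs _)))⟩
    | inr b =>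
      have hcells : l ++ Ty.encode (.prod (.sum A B) C) (Sum.inr b, c) ++ r =
          (l ++ some true :: List.replicate (padr A B) none) ++
            Ty.encode (.prod B C) (b, c) ++ r := by
        simp [Ty.encode, List.append_assoc]
      have hread : readI ⟨⟨l ++ Ty.encode (.prod (.sum A B) C) (Sum.inr b, c) ++ r,
          l.length⟩ :: rs, ⟨p ++ List.replicate D.bitSize none ++ q, p.length⟩ :: ws⟩ =
          some true := by
        unfold readI
        simp only
        rw [show l ++ Ty.encode (.prod (.sum A B) C) (Sum.inr b, c) ++ r =
          l ++ (some true :: (List.replicate (padr A B) none ++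
            (Ty.encode (.prod B C) (b, c) ++ r))) by simp [Ty.encode, List.append_assoc],
          getElem?_len]
        simp
      obtain ⟨n₁, h₁⟩ := iht (b, c) (l ++ some true :: List.replicate (padr A B) none)
        r rs p q ws
      rw [show ((l ++ some true :: List.replicate (padr A B) none).length)
          = l.length + (1 + padr A B) by simp; omega] at h₁
      simp only [runCore, hread]
      rw [hcells]
      exact ⟨_, seq_eval (instr_eval (fwd_eval rfl (by rw [← hcells]; simp [encode_length, Ty.bitSize]; have := encode_length (.prod (.sum A B) C) (Sum.inr b, c); simp only [Ty.bitSize] at this; simp [padl, padr]; omega) rs _))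
        (seq_eval h₁ (instr_eval (bwd_eval rfl rs _)))⟩
  | @pair A B C s t ihs iht =>
    intro v l r rs p q ws
    obtain ⟨n₁, h₁⟩ := ihs v l r rs p (List.replicate C.bitSize none ++ q) ws
    obtain ⟨n₂, h₂⟩ := iht v l r rs (p ++ B.encode (s.eval v)) q ws
    rw [show (p ++ B.encode (s.eval v)).length = p.length + B.bitSize by
      simp [encode_length]] at h₂
    rw [show (Ty.encode (.prod B C) (Term.eval (.pair s t) v) : List Cell)
        = B.encode (s.eval v) ++ C.encode (t.eval v) from rfl,
      show Ty.bitSize (.prod B C) = B.bitSize + C.bitSize from rfl,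
      List.replicate_add, ← Nat.add_assoc]
    simp only [List.append_assoc] at h₁ h₂ ⊢
    exact ⟨_, seq_eval h₁ h₂⟩
  | @take A B C t iht =>
    intro v l r rs p q ws
    obtain ⟨n₁, h₁⟩ := iht v.1 l (B.encode v.2 ++ r) rs p q ws
    refine ⟨n₁, ?_⟩
    show runCore t _ = _
    convert h₁ using 4 <;> simp [Ty.encode, Term.eval, List.append_assoc]
  | @drop A B C t iht =>
    intro v l r rs p q ws
    obtain ⟨n₁, h₁⟩ := iht v.2 (l ++ A.encode v.1) r rs p q ws
    rw [show (l ++ A.encode v.1).length = l.length + A.bitSize by simp [encode_length]] at h₁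
    have hcells : l ++ Ty.encode (.prod A B) v ++ r =
        (l ++ A.encode v.1) ++ B.encode v.2 ++ r := by
      simp [Ty.encode, List.append_assoc]
    rw [hcells]
    exact ⟨_, seq_eval (instr_eval (fwd_eval rfl
        (by rw [← hcells]; simp [encode_length, Ty.bitSize]; omega) rs _))
      (seq_eval h₁ (instr_eval (bwd_eval rfl rs _)))⟩

theorem runCore_correct (A B : Ty) (t : Term A B) (v : A.interp) :
    ∃ n : ℕ, runCore t (initState A B v) = some (finalState A B v (t.eval v), n) := by
  obtain ⟨n, h⟩ := runCore_main t v [] [] [] [] [] []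
  simp only [List.nil_append, List.append_nil, List.length_nil, Nat.zero_add] at h
  exact ⟨n, h⟩
end

section
/- The machine-state transformation induced by executing ⟪t⟫_off followed by dropFrame is identical to that induced by ⟪t⟫_on, for every core Simplicity expression t : A ⊢ B and every machine state on which either execution is defined. -/
/-- The TCO translation of core Simplicity to the Bit Machine.
`runTCO t false` is `⟪t⟫_off` and `runTCO t true` is `⟪t⟫_on`. -/
def runTCO : {A B : Ty} → Term A B → Bool → Run
  | A, _, .iden, tail =>
      if tail then seqRun (instr (copyI A.bitSize)) (instr dropFrameI)
      else instr (copyI A.bitSize)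
  | _, _, @Term.comp _ B _ s t, tail =>
      seqRun (instr (newFrameI B.bitSize))
        (seqRun (runTCO s tail) (seqRun (instr moveFrameI) (runTCO t true)))
  | _, _, .unit, tail => if tail then instr dropFrameI else instr nopI
  | _, _, @Term.injl _ B C t, tail =>
      seqRun (instr (writeI false)) (seqRun (instr (skipI (padl B C))) (runTCO t tail))
  | _, _, @Term.injr _ B C t, tail =>
      seqRun (instr (writeI true)) (seqRun (instr (skipI (padr B C))) (runTCO t tail))
  | _, _, @Term.case A B _ _ s t, tail => fun st =>
      match readI st with
      | some false =>
          if tail then seqRun (instr (fwdI (1 + padl A B))) (runTCO s true) st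
          else
            seqRun (instr (fwdI (1 + padl A B)))
              (seqRun (runTCO s false) (instr (bwdI (1 + padl A B)))) st
      | some true =>
          if tail then seqRun (instr (fwdI (1 + padr A B))) (runTCO t true) st
          else
            seqRun (instr (fwdI (1 + padr A B)))
              (seqRun (runTCO t false) (instr (bwdI (1 + padr A B)))) st
      | none => none
  | _, _, .pair s t, tail => seqRun (runTCO s false) (runTCO t tail)
  | _, _, .take t, tail => runTCO t tail
  | _, _, @Term.drop A _ _ t, tail =>
      if tail then seqRun (instr (fwdI A.bitSize)) (runTCO t true)
      else
        seqRun (instr (fwdI A.bitSize))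
          (seqRun (runTCO t false) (instr (bwdI A.bitSize)))


def fo {A B : Ty} (t : Term A B) (s : MState) : Option MState :=
  (runTCO t false s).map Prod.fst

def go {A B : Ty} (t : Term A B) (s : MState) : Option MState :=
  (runTCO t true s).map Prod.fst

lemma instr_fst (f : MState → Option MState) (s : MState) :
    (instr f s).map Prod.fst = f s := by
  unfold instr; cases f s <;> rfl

lemma seq_fst (p q : Run) (s : MState) :
    (seqRun p q s).map Prod.fst =
      ((p s).map Prod.fst).bind fun s₁ => (q s₁).map Prod.fst := by
  unfold seqRun
  cases hp : p s with
  | none => rfl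
  | some a =>
    cases hq : q a.1 with
    | none => simp [Option.bind, hq]
    | some b => simp [Option.bind, hq]


theorem key : ∀ {A B : Ty} (t : Term A B),
  (∀ (r : Frame) (rs rs' : List Frame) (ws : List Frame),
     (runTCO t false ⟨r::rs, ws⟩).map Prod.fst =
     ((runTCO t false ⟨r::rs', ws⟩).map Prod.fst).map
       (fun s' => ⟨r::rs, s'.writeStack⟩)) ∧
  (∀ (r r' : Frame) (rest rs' : List Frame) (ws : List Frame),
     (runTCO t true ⟨r::r'::rest, ws⟩).map Prod.fst =
     ((runTCO t false ⟨r::rs', ws⟩).map Prod.fst).map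
       (fun s' => ⟨r'::rest, s'.writeStack⟩)) ∧
  (∀ (ws : List Frame) (s' : MState),
     (runTCO t false ⟨[], ws⟩).map Prod.fst = some s' → s'.readStack = []) ∧
  (∀ (r : Frame) (ws : List Frame),
     (runTCO t true ⟨[r], ws⟩).map Prod.fst = none) ∧
  (∀ (ws : List Frame), (runTCO t true ⟨[], ws⟩).map Prod.fst = none) := by
  intro A B t
  induction t with
  | iden =>
    refine ⟨?_, ?_, ?_, ?_, ?_⟩
    · intro r rs rs' ws
      cases ws with
      | nil => simp [runTCO, instr_fst, copyI]
      | cons w wsr =>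
        simp only [runTCO, Bool.false_eq_true, if_false, instr_fst, copyI]
        split <;> simp
    · intro r r' rest rs' ws
      cases ws with
      | nil => simp [runTCO, seq_fst, instr_fst, copyI]
      | cons w wsr =>
        simp only [runTCO, if_true, Bool.false_eq_true, if_false, seq_fst,
          instr_fst, copyI]
        split <;> simp [dropFrameI]
    · intro ws s' h
      simp [runTCO, instr_fst, copyI] at h
    · intro r ws
      cases ws with
      | nil => simp [runTCO, seq_fst, instr_fst, copyI]
      | cons w wsr =>
        simp only [runTCO, if_true, seq_fst, instr_fst, copyI]
        split <;> simp [dropFrameI]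
    · intro ws
      simp [runTCO, seqRun, instr, copyI]
  | @comp A B C s t ihs iht =>
    obtain ⟨ihs1, ihs2, ihs3, ihs4, ihs5⟩ := ihs
    obtain ⟨iht1, iht2, iht3, iht4, iht5⟩ := iht
    refine ⟨?_, ?_, ?_, ?_, ?_⟩
    · intro r rs rs' ws
      simp only [runTCO, seq_fst, instr_fst, newFrameI, Option.bind_some]
      rw [ihs1 r rs rs' (⟨List.replicate B.bitSize none, 0⟩ :: ws)]
      cases h : (runTCO s false
          ⟨r::rs', ⟨List.replicate B.bitSize none, 0⟩ :: ws⟩).map Prod.fst with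
      | none => simp
      | some s₁ =>
        have hs : s₁ = ⟨r::rs', s₁.writeStack⟩ := by
          have h2 := ihs1 r rs' rs' (⟨List.replicate B.bitSize none, 0⟩ :: ws)
          rw [h] at h2; simpa using h2
        obtain ⟨W, rfl⟩ : ∃ W, s₁ = ⟨r::rs', W⟩ := ⟨_, hs⟩
        match W with
        | [] => simp [moveFrameI]
        | [w] => simp [moveFrameI]
        | w :: w' :: wr =>
          simp only [Option.map_some, Option.bind_some, moveFrameI]
          rw [iht2 ⟨w.cells, 0⟩ r rs [], iht2 ⟨w.cells, 0⟩ r rs' []]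
          cases (runTCO t false ⟨[⟨w.cells, 0⟩], w' :: wr⟩).map Prod.fst <;> simp
    · intro r r' rest rs' ws
      simp only [runTCO, seq_fst, instr_fst, newFrameI, Option.bind_some]
      rw [ihs2 r r' rest rs' (⟨List.replicate B.bitSize none, 0⟩ :: ws)]
      cases h : (runTCO s false
          ⟨r::rs', ⟨List.replicate B.bitSize none, 0⟩ :: ws⟩).map Prod.fst with
      | none => simp
      | some s₁ =>
        have hs : s₁ = ⟨r::rs', s₁.writeStack⟩ := by
          have h2 := ihs1 r rs' rs' (⟨List.replicate B.bitSize none, 0⟩ :: ws)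
          rw [h] at h2; simpa using h2
        obtain ⟨W, rfl⟩ : ∃ W, s₁ = ⟨r::rs', W⟩ := ⟨_, hs⟩
        match W with
        | [] => simp [moveFrameI]
        | [w] => simp [moveFrameI]
        | w :: w' :: wr =>
          simp only [Option.map_some, Option.bind_some, moveFrameI]
          rw [iht2 ⟨w.cells, 0⟩ r' rest [], iht2 ⟨w.cells, 0⟩ r rs' []]
          cases (runTCO t false ⟨[⟨w.cells, 0⟩], w' :: wr⟩).map Prod.fst <;> simp
    · intro ws s' hfin
      simp only [runTCO, seq_fst, instr_fst, newFrameI, Option.bind_some] at hfin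
      cases h : (runTCO s false
          ⟨[], ⟨List.replicate B.bitSize none, 0⟩ :: ws⟩).map Prod.fst with
      | none => rw [h] at hfin; simp at hfin
      | some s₁ =>
        rw [h] at hfin
        have hr : s₁.readStack = [] := ihs3 _ _ h
        obtain ⟨W, rfl⟩ : ∃ W, s₁ = ⟨[], W⟩ :=
          ⟨s₁.writeStack, by cases s₁; simp_all⟩
        match W with
        | [] => simp [moveFrameI] at hfin
        | [w] => simp [moveFrameI] at hfin
        | w :: w' :: wr =>
          simp only [Option.bind_some, moveFrameI] at hfin
          rw [iht4 ⟨w.cells, 0⟩ (w' :: wr)] at hfin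
          simp at hfin
    · intro r ws
      simp only [runTCO, seq_fst, instr_fst, newFrameI, Option.bind_some]
      rw [ihs4 r (⟨List.replicate B.bitSize none, 0⟩ :: ws)]
      simp
    · intro ws
      simp only [runTCO, seq_fst, instr_fst, newFrameI, Option.bind_some]
      rw [ihs5 (⟨List.replicate B.bitSize none, 0⟩ :: ws)]
      simp
  | unit =>
    refine ⟨?_, ?_, ?_, ?_, ?_⟩
    · intro r rs rs' ws; simp [runTCO, instr_fst, nopI]
    · intro r r' rest rs' ws; simp [runTCO, instr_fst, nopI, dropFrameI]
    · intro ws s' h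
      simp [runTCO, instr_fst, nopI] at h
      simp [← h]
    · intro r ws; simp [runTCO, instr_fst, dropFrameI]
    · intro ws; simp [runTCO, instr_fst, dropFrameI]
  | injl t ih =>
    obtain ⟨ih1, ih2, ih3, ih4, ih5⟩ := ih
    refine ⟨?_, ?_, ?_, ?_, ?_⟩
    · intro r rs rs' ws
      cases ws with
      | nil => simp [runTCO, seq_fst, instr_fst, writeI]
      | cons w wsr =>
        simp only [runTCO, seq_fst, instr_fst, writeI]
        split
        · simp only [Option.bind_some, Option.bind_none, skipI]
          split
          · simp only [Option.bind_some]
            rw [ih1 r rs rs']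
          · simp
        · simp
    · intro r r' rest rs' ws
      cases ws with
      | nil => simp [runTCO, seq_fst, instr_fst, writeI]
      | cons w wsr =>
        simp only [runTCO, seq_fst, instr_fst, writeI]
        split
        · simp only [Option.bind_some, Option.bind_none, skipI]
          split
          · simp only [Option.bind_some]
            rw [ih2 r r' rest rs']
          · simp
        · simp
    · intro ws s' h
      cases ws with
      | nil => simp [runTCO, seq_fst, instr_fst, writeI] at h
      | cons w wsr =>
        simp only [runTCO, seq_fst, instr_fst, writeI] at h
        split at h
        · simp only [Option.bind_some, skipI] at h
          split at h
          · simp only [Option.bind_some] at h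
            exact ih3 _ _ h
          · simp at h
        · simp at h
    · intro r ws
      cases ws with
      | nil => simp [runTCO, seq_fst, instr_fst, writeI]
      | cons w wsr =>
        simp only [runTCO, seq_fst, instr_fst, writeI]
        split
        · simp only [Option.bind_some, skipI]
          split
          · simp only [Option.bind_some]
            exact ih4 r _
          · simp
        · simp
    · intro ws
      cases ws with
      | nil => simp [runTCO, seq_fst, instr_fst, writeI]
      | cons w wsr =>
        simp only [runTCO, seq_fst, instr_fst, writeI]
        split
        · simp only [Option.bind_some, skipI]
          split
          · simp only [Option.bind_some]
            exact ih5 _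
          · simp
        · simp
  | injr t ih =>
    obtain ⟨ih1, ih2, ih3, ih4, ih5⟩ := ih
    refine ⟨?_, ?_, ?_, ?_, ?_⟩
    · intro r rs rs' ws
      cases ws with
      | nil => simp [runTCO, seq_fst, instr_fst, writeI]
      | cons w wsr =>
        simp only [runTCO, seq_fst, instr_fst, writeI]
        split
        · simp only [Option.bind_some, Option.bind_none, skipI]
          split
          · simp only [Option.bind_some]
            rw [ih1 r rs rs']
          · simp
        · simp
    · intro r r' rest rs' ws
      cases ws with
      | nil => simp [runTCO, seq_fst, instr_fst, writeI]
      | cons w wsr =>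
        simp only [runTCO, seq_fst, instr_fst, writeI]
        split
        · simp only [Option.bind_some, Option.bind_none, skipI]
          split
          · simp only [Option.bind_some]
            rw [ih2 r r' rest rs']
          · simp
        · simp
    · intro ws s' h
      cases ws with
      | nil => simp [runTCO, seq_fst, instr_fst, writeI] at h
      | cons w wsr =>
        simp only [runTCO, seq_fst, instr_fst, writeI] at h
        split at h
        · simp only [Option.bind_some, skipI] at h
          split at h
          · simp only [Option.bind_some] at h
            exact ih3 _ _ h
          · simp at h
        · simp at h
    · intro r ws
      cases ws with
      | nil => simp [runTCO, seq_fst, instr_fst, writeI]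
      | cons w wsr =>
        simp only [runTCO, seq_fst, instr_fst, writeI]
        split
        · simp only [Option.bind_some, skipI]
          split
          · simp only [Option.bind_some]
            exact ih4 r _
          · simp
        · simp
    · intro ws
      cases ws with
      | nil => simp [runTCO, seq_fst, instr_fst, writeI]
      | cons w wsr =>
        simp only [runTCO, seq_fst, instr_fst, writeI]
        split
        · simp only [Option.bind_some, skipI]
          split
          · simp only [Option.bind_some]
            exact ih5 _
          · simp
        · simp
  | @case A B C D s t ihs iht =>
    obtain ⟨ihs1, ihs2, ihs3, ihs4, ihs5⟩ := ihs
    obtain ⟨iht1, iht2, iht3, iht4, iht5⟩ := iht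
    refine ⟨?_, ?_, ?_, ?_, ?_⟩
    · intro r rs rs' ws
      simp only [runTCO]
      rw [show readI (⟨r::rs, ws⟩ : MState) = readI ⟨r::rs', ws⟩ from rfl]
      cases h : readI (⟨r::rs', ws⟩ : MState) with
      | none => simp
      | some b =>
        cases b with
        | false =>
          simp only [if_true, Bool.false_eq_true, if_false, seq_fst, instr_fst, fwdI]
          split
          · simp only [Option.bind_some]
            rw [ihs1 ⟨r.cells, r.cursor + (1 + padl A B)⟩ rs rs']
            cases h2 : (runTCO s false
                ⟨⟨r.cells, r.cursor + (1 + padl A B)⟩::rs', ws⟩).map Prod.fst with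
            | none => simp
            | some s₁ =>
              have hs : s₁ = ⟨⟨r.cells, r.cursor + (1 + padl A B)⟩::rs', s₁.writeStack⟩ := by
                have h3 := ihs1 ⟨r.cells, r.cursor + (1 + padl A B)⟩ rs' rs' ws
                rw [h2] at h3; simpa using h3
              obtain ⟨W, rfl⟩ : ∃ W, s₁ = ⟨⟨r.cells, r.cursor + (1 + padl A B)⟩::rs', W⟩ := ⟨_, hs⟩
              simp [bwdI]
          · simp
        | true =>
          simp only [if_true, Bool.false_eq_true, if_false, seq_fst, instr_fst, fwdI]
          split
          · simp only [Option.bind_some]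
            rw [iht1 ⟨r.cells, r.cursor + (1 + padr A B)⟩ rs rs']
            cases h2 : (runTCO t false
                ⟨⟨r.cells, r.cursor + (1 + padr A B)⟩::rs', ws⟩).map Prod.fst with
            | none => simp
            | some s₁ =>
              have hs : s₁ = ⟨⟨r.cells, r.cursor + (1 + padr A B)⟩::rs', s₁.writeStack⟩ := by
                have h3 := iht1 ⟨r.cells, r.cursor + (1 + padr A B)⟩ rs' rs' ws
                rw [h2] at h3; simpa using h3
              obtain ⟨W, rfl⟩ : ∃ W, s₁ = ⟨⟨r.cells, r.cursor + (1 + padr A B)⟩::rs', W⟩ := ⟨_, hs⟩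
              simp [bwdI]
          · simp
    · intro r r' rest rs' ws
      simp only [runTCO]
      rw [show readI (⟨r::r'::rest, ws⟩ : MState) = readI ⟨r::rs', ws⟩ from rfl]
      cases h : readI (⟨r::rs', ws⟩ : MState) with
      | none => simp
      | some b =>
        cases b with
        | false =>
          simp only [if_true, Bool.false_eq_true, if_false, seq_fst, instr_fst, fwdI]
          split
          · simp only [Option.bind_some]
            rw [ihs2 ⟨r.cells, r.cursor + (1 + padl A B)⟩ r' rest rs']
            cases h2 : (runTCO s false
                ⟨⟨r.cells, r.cursor + (1 + padl A B)⟩::rs', ws⟩).map Prod.fst with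
            | none => simp
            | some s₁ =>
              have hs : s₁ = ⟨⟨r.cells, r.cursor + (1 + padl A B)⟩::rs', s₁.writeStack⟩ := by
                have h3 := ihs1 ⟨r.cells, r.cursor + (1 + padl A B)⟩ rs' rs' ws
                rw [h2] at h3; simpa using h3
              obtain ⟨W, rfl⟩ : ∃ W, s₁ = ⟨⟨r.cells, r.cursor + (1 + padl A B)⟩::rs', W⟩ := ⟨_, hs⟩
              simp [bwdI]
          · simp
        | true =>
          simp only [if_true, Bool.false_eq_true, if_false, seq_fst, instr_fst, fwdI]
          split
          · simp only [Option.bind_some]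
            rw [iht2 ⟨r.cells, r.cursor + (1 + padr A B)⟩ r' rest rs']
            cases h2 : (runTCO t false
                ⟨⟨r.cells, r.cursor + (1 + padr A B)⟩::rs', ws⟩).map Prod.fst with
            | none => simp
            | some s₁ =>
              have hs : s₁ = ⟨⟨r.cells, r.cursor + (1 + padr A B)⟩::rs', s₁.writeStack⟩ := by
                have h3 := iht1 ⟨r.cells, r.cursor + (1 + padr A B)⟩ rs' rs' ws
                rw [h2] at h3; simpa using h3
              obtain ⟨W, rfl⟩ : ∃ W, s₁ = ⟨⟨r.cells, r.cursor + (1 + padr A B)⟩::rs', W⟩ := ⟨_, hs⟩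
              simp [bwdI]
          · simp
    · intro ws s' hfin
      simp [runTCO, readI] at hfin
    · intro r ws
      simp only [runTCO]
      cases h : readI (⟨[r], ws⟩ : MState) with
      | none => simp
      | some b =>
        cases b with
        | false =>
          simp only [if_true, seq_fst, instr_fst, fwdI]
          split
          · simp only [Option.bind_some]; exact ihs4 _ _
          · simp
        | true =>
          simp only [if_true, seq_fst, instr_fst, fwdI]
          split
          · simp only [Option.bind_some]; exact iht4 _ _
          · simp
    · intro ws
      simp [runTCO, readI]
  | pair s t ihs iht =>
    obtain ⟨ihs1, ihs2, ihs3, ihs4, ihs5⟩ := ihs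
    obtain ⟨iht1, iht2, iht3, iht4, iht5⟩ := iht
    refine ⟨?_, ?_, ?_, ?_, ?_⟩
    · intro r rs rs' ws
      simp only [runTCO, seq_fst]
      rw [ihs1 r rs rs']
      cases h : (runTCO s false ⟨r::rs', ws⟩).map Prod.fst with
      | none => simp
      | some s₁ =>
        have hs : s₁ = ⟨r::rs', s₁.writeStack⟩ := by
          have h2 := ihs1 r rs' rs' ws; rw [h] at h2; simpa using h2
        obtain ⟨W, rfl⟩ : ∃ W, s₁ = ⟨r::rs', W⟩ := ⟨_, hs⟩
        simp only [Option.map_some, Option.bind_some]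
        rw [iht1 r rs rs']
    · intro r r' rest rs' ws
      simp only [runTCO, seq_fst]
      rw [ihs1 r (r'::rest) rs']
      cases h : (runTCO s false ⟨r::rs', ws⟩).map Prod.fst with
      | none => simp
      | some s₁ =>
        have hs : s₁ = ⟨r::rs', s₁.writeStack⟩ := by
          have h2 := ihs1 r rs' rs' ws; rw [h] at h2; simpa using h2
        obtain ⟨W, rfl⟩ : ∃ W, s₁ = ⟨r::rs', W⟩ := ⟨_, hs⟩
        simp only [Option.map_some, Option.bind_some]
        rw [iht2 r r' rest rs']
    · intro ws s' hfin
      simp only [runTCO, seq_fst] at hfin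
      cases h : (runTCO s false ⟨[], ws⟩).map Prod.fst with
      | none => rw [h] at hfin; simp at hfin
      | some s₁ =>
        rw [h] at hfin
        have hr : s₁.readStack = [] := ihs3 ws s₁ h
        obtain ⟨W, rfl⟩ : ∃ W, s₁ = ⟨[], W⟩ :=
          ⟨s₁.writeStack, by cases s₁; simp_all⟩
        simp only [Option.bind_some] at hfin
        exact iht3 _ _ hfin
    · intro r ws
      simp only [runTCO, seq_fst]
      cases h : (runTCO s false ⟨[r], ws⟩).map Prod.fst with
      | none => simp
      | some s₁ =>
        have hs : s₁ = ⟨[r], s₁.writeStack⟩ := by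
          have h2 := ihs1 r [] [] ws; rw [h] at h2; simpa using h2
        obtain ⟨W, rfl⟩ : ∃ W, s₁ = ⟨[r], W⟩ := ⟨_, hs⟩
        simp only [Option.bind_some]
        exact iht4 r _
    · intro ws
      simp only [runTCO, seq_fst]
      cases h : (runTCO s false ⟨[], ws⟩).map Prod.fst with
      | none => simp
      | some s₁ =>
        have hr : s₁.readStack = [] := ihs3 ws s₁ h
        obtain ⟨W, rfl⟩ : ∃ W, s₁ = ⟨[], W⟩ :=
          ⟨s₁.writeStack, by cases s₁; simp_all⟩
        simp only [Option.bind_some]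
        exact iht5 _
  | take t ih =>
    obtain ⟨ih1, ih2, ih3, ih4, ih5⟩ := ih
    exact ⟨fun r rs rs' ws => by simpa [runTCO] using ih1 r rs rs' ws,
      fun r r' rest rs' ws => by simpa [runTCO] using ih2 r r' rest rs' ws,
      fun ws s' h => ih3 ws s' (by simpa [runTCO] using h),
      fun r ws => by simpa [runTCO] using ih4 r ws,
      fun ws => by simpa [runTCO] using ih5 ws⟩
  | @drop A B C t ih =>
    obtain ⟨ih1, ih2, ih3, ih4, ih5⟩ := ih
    refine ⟨?_, ?_, ?_, ?_, ?_⟩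
    · intro r rs rs' ws
      simp only [runTCO, Bool.false_eq_true, if_false, seq_fst, instr_fst, fwdI]
      split
      · simp only [Option.bind_some]
        rw [ih1 ⟨r.cells, r.cursor + A.bitSize⟩ rs rs']
        cases h : (runTCO t false ⟨⟨r.cells, r.cursor + A.bitSize⟩::rs', ws⟩).map Prod.fst with
        | none => simp
        | some s₁ =>
          have hs : s₁ = ⟨⟨r.cells, r.cursor + A.bitSize⟩::rs', s₁.writeStack⟩ := by
            have h2 := ih1 ⟨r.cells, r.cursor + A.bitSize⟩ rs' rs' ws; rw [h] at h2
            simpa using h2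
          obtain ⟨W, rfl⟩ : ∃ W, s₁ = ⟨⟨r.cells, r.cursor + A.bitSize⟩::rs', W⟩ := ⟨_, hs⟩
          simp [bwdI]
      · simp
    · intro r r' rest rs' ws
      simp only [runTCO, if_true, Bool.false_eq_true, if_false, seq_fst,
        instr_fst, fwdI]
      split
      · simp only [Option.bind_some]
        rw [ih2 ⟨r.cells, r.cursor + A.bitSize⟩ r' rest rs']
        cases h : (runTCO t false ⟨⟨r.cells, r.cursor + A.bitSize⟩::rs', ws⟩).map Prod.fst with
        | none => simp
        | some s₁ =>
          have hs : s₁ = ⟨⟨r.cells, r.cursor + A.bitSize⟩::rs', s₁.writeStack⟩ := by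
            have h2 := ih1 ⟨r.cells, r.cursor + A.bitSize⟩ rs' rs' ws; rw [h] at h2
            simpa using h2
          obtain ⟨W, rfl⟩ : ∃ W, s₁ = ⟨⟨r.cells, r.cursor + A.bitSize⟩::rs', W⟩ := ⟨_, hs⟩
          simp [bwdI]
      · simp
    · intro ws s' hfin
      simp [runTCO, seq_fst, instr_fst, fwdI] at hfin
    · intro r ws
      simp only [runTCO, if_true, seq_fst, instr_fst, fwdI]
      split
      · simp only [Option.bind_some]
        exact ih4 _ _
      · simp
    · intro ws
      simp [runTCO, seq_fst, instr_fst, fwdI]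

theorem runTCO_off_dropFrame_eq_on (A B : Ty) (t : Term A B) (s : MState) :
    ((runTCO t false s).map Prod.fst).bind dropFrameI =
      (runTCO t true s).map Prod.fst := by
  obtain ⟨P1, P2, P3, P4, P5⟩ := key t
  obtain ⟨R, W⟩ := s
  match R with
  | [] =>
    rw [show (⟨[], W⟩ : MState) = ⟨[], W⟩ from rfl]
    rw [P5 W]
    cases h : (runTCO t false ⟨[], W⟩).map Prod.fst with
    | none => simp [h]
    | some s' =>
      have hr := P3 W s' h
      obtain ⟨W', rfl⟩ : ∃ W', s' = ⟨[], W'⟩ := ⟨s'.writeStack, by cases s'; simp_all⟩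
      simp [h, dropFrameI]
  | [r] =>
    rw [P4 r W]
    cases h : (runTCO t false ⟨[r], W⟩).map Prod.fst with
    | none => simp [h]
    | some s' =>
      have h2 := P1 r [] [] W; rw [h] at h2
      obtain ⟨W', rfl⟩ : ∃ W', s' = ⟨[r], W'⟩ := ⟨s'.writeStack, by simpa using h2⟩
      simp [h, dropFrameI]
  | r :: r' :: rest =>
    rw [P2 r r' rest (r'::rest) W]
    cases h : (runTCO t false ⟨r::r'::rest, W⟩).map Prod.fst with
    | none => simp [h]
    | some s' =>
      have h2 := P1 r (r'::rest) (r'::rest) W; rw [h] at h2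
      obtain ⟨W', rfl⟩ : ∃ W', s' = ⟨r::r'::rest, W'⟩ :=
        ⟨s'.writeStack, by simpa using h2⟩
      simp [h, dropFrameI]
end
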